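/- arXiv:2602.20887 — 4 statements merged into one kernel-verified Lean document; each statement's English description precedes it below -/
import Mathlib

section
/- For the d-dimensional Morton index m on [0,2^L)^d, if cube Q' of level l+1 is a child of cube Q of level l (i.e., each anchor coordinate of Q' equals that of Q or that of Q plus 2^{L−(l+1)}), then m(anchor(Q)) ≤ m(anchor(Q')) < m(anchor(Q)) + 2^{d(L−l)}. -/
/-!
With `k = L - (l + 1)`, every coordinate of the child anchor is `a i` or `a i + 2 ^ k`, and
`2 ^ (k + 1) ∣ a i`, so the addition only sets bit `k` of `a i`. Hence the Morton index grows
by exactly `∑ 2 ^ (d * k + i)` over the moved coordinates `i`, a sum of distinct powers of two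
below `2 ^ (d * (k + 1)) = 2 ^ (d * (L - l))`.
-/

def morton (d L : ℕ) (p : Fin d → ℕ) : ℕ :=
  ∑ j ∈ Finset.range L, ∑ i : Fin d, ((p i).testBit j).toNat * 2 ^ (d * j + (i : ℕ))

open Finset

theorem Nat.toNat_testBit_add_two_pow_of_dvd {n k : ℕ} (h : 2 ^ (k + 1) ∣ n) (j : ℕ) :
    ((n + 2 ^ k).testBit j).toNat = (n.testBit j).toNat + if j = k then 1 else 0 := by
  obtain ⟨q, rfl⟩ := h
  rw [Nat.testBit_two_pow_mul_add q (Nat.pow_lt_pow_right (by norm_num) k.lt_succ_self),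
    Nat.testBit_two_pow_mul, Nat.testBit_two_pow]
  split_ifs <;> grind

theorem morton_add_two_pow {d L k : ℕ} (hk : k < L) (p : Fin d → ℕ) (s : Finset (Fin d))
    (hp : ∀ i ∈ s, 2 ^ (k + 1) ∣ p i) :
    morton d L (fun i => if i ∈ s then p i + 2 ^ k else p i)
      = morton d L p + ∑ i ∈ s, 2 ^ (d * k + i) := by
  have hterm : ∀ j i,
      ((if i ∈ s then p i + 2 ^ k else p i).testBit j).toNat * 2 ^ (d * j + i)
        = ((p i).testBit j).toNat * 2 ^ (d * j + i)
          + if j = k ∧ i ∈ s then 2 ^ (d * j + i) else 0 := by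
    intro j i
    split_ifs <;> simp_all [Nat.toNat_testBit_add_two_pow_of_dvd, add_mul]
  simp only [morton, hterm, sum_add_distrib, add_right_inj]
  simp [ite_and, sum_ite_eq', hk]

theorem sum_two_pow_add_lt {d : ℕ} (s : Finset (Fin d)) (m : ℕ) :
    ∑ i ∈ s, 2 ^ (m + i) < 2 ^ (m + d) := by
  simp only [pow_add, ← mul_sum]
  refine Nat.mul_lt_mul_of_pos_left ?_ (Nat.two_pow_pos m)
  simpa using Nat.geomSum_lt le_rfl (s := s.map Fin.valEmbedding) (n := d) (by simp)

theorem morton_child_range_general (d L l : ℕ) (hl : l + 1 ≤ L)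
    (a a' : Fin d → ℕ)
    (ha : ∀ i, a i < 2 ^ L ∧ 2 ^ (L - l) ∣ a i)
    (hchild : ∀ i, a' i = a i ∨ a' i = a i + 2 ^ (L - (l + 1))) :
    morton d L a ≤ morton d L a' ∧
      morton d L a' < morton d L a + 2 ^ (d * (L - l)) := by
  set k := L - (l + 1)
  have hLl : L - l = k + 1 := by omega
  let s := univ.filter fun i => a' i ≠ a i
  have ha' : a' = fun i => if i ∈ s then a i + 2 ^ k else a i := by
    funext i
    rcases hchild i with h | h <;> simp [s, h]
  rw [ha', morton_add_two_pow (by omega) a s fun i _ => hLl ▸ (ha i).2, hLl, Nat.mul_succ]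
  exact ⟨Nat.le_add_right _ _, Nat.add_lt_add_left (sum_two_pow_add_lt s _) _⟩

/-- If a cube `Q'` of level `l+1` is a child of the cube `Q` of level `l`,
then the Morton index of its anchor lies in the contiguous range of `Q`. -/
theorem morton_child_range (d L l : ℕ) (hd : 1 ≤ d) (hl : l + 1 ≤ L)
    (a a' : Fin d → ℕ)
    (ha : ∀ i, a i < 2 ^ L ∧ 2 ^ (L - l) ∣ a i)
    (hchild : ∀ i, a' i = a i ∨ a' i = a i + 2 ^ (L - (l + 1))) :
    morton d L a ≤ morton d L a' ∧
      morton d L a' < morton d L a + 2 ^ (d * (L - l)) :=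
  morton_child_range_general d L l hl a a' ha hchild
end

section
/- With offsets O_p = ⌊pN/P⌋, the process owning element E, given by p(E) = P − 1 − ⌊P(N − 1 − E)/N⌋ for 0 ≤ E < N, satisfies O_{p(E)} ≤ E < O_{p(E)+1}. -/
theorem element_to_process_consistent (N P E : ℕ) (hN : 0 < N) (hP : 0 < P)
    (hE : E < N) :
    (P - 1 - P * (N - 1 - E) / N) * N / P ≤ E ∧
      E < ((P - 1 - P * (N - 1 - E) / N) + 1) * N / P := by
  set a := N - 1 - E with ha
  set q := P * a / N with hq
  have hq1 : q * N ≤ P * a := Nat.div_mul_le_self _ _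
  have hq2 : P * a < q * N + N := by
    conv_lhs => rw [← Nat.div_add_mod (P * a) N]
    have h := Nat.mod_lt (P * a) hN
    have h' : N * (P * a / N) = q * N := by rw [← hq, Nat.mul_comm]
    linarith
  have hqP : q < P := by
    have haN : a < N := by omega
    have : P * a < P * N := mul_lt_mul_of_pos_left haN hP
    exact (Nat.div_lt_iff_lt_mul hN).2 this
  have h1 : (P - 1 - q) * N + (q * N + N) = P * N := by
    have h : (P - 1 - q) + (q + 1) = P := by omega
    calc (P - 1 - q) * N + (q * N + N) = ((P - 1 - q) + (q + 1)) * N := by ring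
    _ = P * N := by rw [h]
  have h2 : P * a + P * (E + 1) = P * N := by
    have h : a + (E + 1) = N := by omega
    calc P * a + P * (E + 1) = P * (a + (E + 1)) := by ring
    _ = P * N := by rw [h]
  constructor
  · have hlt : (P - 1 - q) * N < (E + 1) * P := by
      have := Nat.mul_comm (E + 1) P
      omega
    have := (Nat.div_lt_iff_lt_mul hP).2 hlt
    omega
  · show E + 1 ≤ _
    apply (Nat.le_div_iff_mul_le hP).2
    have h3 : (P - 1 - q + 1) * N = (P - 1 - q) * N + N := by ring
    have := Nat.mul_comm (E + 1) P
    omega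
end

section
/- The element-to-process map p(E) = P − 1 − ⌊P(N−1−E)/N⌋ is monotone nondecreasing in E, maps into {0,…,P−1}, and p(O_q) = q whenever process q is nonempty (O_q < O_{q+1}). -/
theorem element_to_process_properties (N P : ℕ) (hN : 0 < N) (hP : 0 < P) :
    (∀ E E', E < N → E' < N → E ≤ E' →
        P - 1 - P * (N - 1 - E) / N ≤ P - 1 - P * (N - 1 - E') / N) ∧
    (∀ E, E < N → P - 1 - P * (N - 1 - E) / N < P) ∧
    (∀ q, q < P → q * N / P < (q + 1) * N / P →
        P - 1 - P * (N - 1 - q * N / P) / N = q) := by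
  refine ⟨?_, ?_, ?_⟩
  · intro E E' _ _ hEE'
    exact Nat.sub_le_sub_left (Nat.div_le_div_right (Nat.mul_le_mul_left P
      (Nat.sub_le_sub_left hEE' _))) _
  · intro E _
    exact lt_of_le_of_lt (Nat.sub_le _ _) (Nat.sub_lt hP one_pos)
  · intro q hq hne
    set O := q * N / P with hO
    have h1 : P * O ≤ q * N := by
      rw [mul_comm]; exact Nat.div_mul_le_self _ _
    have h2 : q * N < P * (O + 1) := by
      rw [mul_comm P]; exact (Nat.div_lt_iff_lt_mul hP).mp (Nat.lt_succ_self O)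
    have h3 : P * (O + 1) ≤ (q + 1) * N := by
      have hle : O + 1 ≤ (q + 1) * N / P := hne
      calc P * (O + 1) ≤ P * ((q + 1) * N / P) := Nat.mul_le_mul_left P hle
        _ ≤ (q + 1) * N := by rw [mul_comm]; exact Nat.div_mul_le_self _ _
    have hON : O + 1 ≤ N := by nlinarith
    have heq : P * (N - 1 - O) + P * (O + 1) = P * N := by
      rw [← Nat.mul_add]; congr 1; omega
    have hsum : (P - 1 - q) * N + (q + 1) * N = P * N := by
      rw [← Nat.add_mul]; congr 1; omega
    have hsum2 : q * N + (P - q) * N = P * N := by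
      rw [← Nat.add_mul]; congr 1; omega
    have hup : (P - 1 - q + 1) * N = (P - q) * N := by congr 1; omega
    have hkey : P * (N - 1 - O) / N = P - 1 - q := by
      apply Nat.div_eq_of_lt_le
      · omega
      · omega
    rw [hkey]; omega
end

section
/- For any d ≥ 1 and L ≥ 1, the d-dimensional Morton index restricted to anchors of level-l cubes is order-embedding with respect to the descendant relation: if cube A (level l_A) is an ancestor of cube B (level l_B ≥ l_A), then m(anchor(A)) ≤ m(anchor(B)), and conversely if m(anchor(A)) ≤ m(anchor(B)) < m(anchor(A)) + 2^{d(L−l_A)} then B's anchor lies in A. -/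
open Finset

namespace Nat

theorem testBit_sum_two_pow (s : Finset ℕ) (k : ℕ) :
    (∑ i ∈ s, 2 ^ i).testBit k = true ↔ k ∈ s := by
  rw [← mem_bitIndices, ← List.mem_toFinset, Finset.toFinset_bitIndices_sum_two_pow]

theorem testBit_eq_false_of_two_pow_dvd {n s j : ℕ} (h : 2 ^ s ∣ n) (hj : j < s) :
    n.testBit j = false := by
  obtain ⟨q, rfl⟩ := h
  simp [testBit_two_pow_mul, hj]

theorem div_two_pow_eq_iff_testBit_eq {m n s : ℕ} :
    m / 2 ^ s = n / 2 ^ s ↔ ∀ j, s ≤ j → m.testBit j = n.testBit j := by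
  refine ⟨fun h j hj => ?_, fun h => eq_of_testBit_eq fun j => ?_⟩
  · obtain ⟨j, rfl⟩ := Nat.exists_eq_add_of_le' hj
    rw [← testBit_div_two_pow, h, testBit_div_two_pow]
  · rw [testBit_div_two_pow, testBit_div_two_pow]
    exact h _ (Nat.le_add_left _ _)

theorem div_eq_div_iff_of_dvd {a b k : ℕ} (hk : 0 < k) (ha : k ∣ a) :
    b / k = a / k ↔ a ≤ b ∧ b < a + k := by
  obtain ⟨q, rfl⟩ := ha
  rw [Nat.mul_div_cancel_left q hk, Nat.div_eq_iff hk, Nat.mul_comm q k]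
  omega

end Nat

theorem mul_add_fin_injective (d : ℕ) :
    Function.Injective fun x : ℕ × Fin d => d * x.1 + x.2 := by
  rintro ⟨j, i⟩ ⟨j', i'⟩ h
  have hd : 0 < d := i.pos
  have hj : j = j' := by
    simpa [Nat.mul_add_div hd, Nat.div_eq_of_lt] using congrArg (· / d) h
  subst hj
  simpa [Fin.ext_iff] using h

theorem morton_eq_sum_two_pow (d L : ℕ) (p : Fin d → ℕ) :
    morton d L p = ∑ x ∈ (range L ×ˢ univ).filter (fun x : ℕ × Fin d => (p x.2).testBit x.1),
      2 ^ (d * x.1 + x.2) := by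
  rw [sum_filter, sum_product, morton]
  refine sum_congr rfl fun j _ => sum_congr rfl fun i _ => ?_
  cases (p i).testBit j <;> simp

theorem testBit_morton (d L : ℕ) (p : Fin d → ℕ) (j : ℕ) (i : Fin d) :
    (morton d L p).testBit (d * j + i) = true ↔ j < L ∧ (p i).testBit j = true := by
  rw [morton_eq_sum_two_pow, ← sum_image fun x _ y _ h => mul_add_fin_injective d h,
    Nat.testBit_sum_two_pow,
    show d * j + (i : ℕ) = (fun x : ℕ × Fin d => d * x.1 + x.2) (j, i) from rfl,
    (mul_add_fin_injective d).mem_finset_image]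
  simp

theorem morton_le_morton {d L : ℕ} {p q : Fin d → ℕ}
    (h : ∀ i j, (p i).testBit j = true → (q i).testBit j = true) :
    morton d L p ≤ morton d L q := by
  simp only [morton_eq_sum_two_pow]
  exact sum_le_sum_of_subset (monotone_filter_right _ fun x _ => h x.2 x.1)

theorem two_pow_dvd_morton {d L s : ℕ} {p : Fin d → ℕ} (hp : ∀ i, 2 ^ s ∣ p i) :
    2 ^ (d * s) ∣ morton d L p := by
  rw [morton_eq_sum_two_pow]
  refine dvd_sum fun x hx => pow_dvd_pow 2 ?_
  have hs : s ≤ x.1 := by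
    by_contra! hlt
    simp [Nat.testBit_eq_false_of_two_pow_dvd (hp x.2) hlt] at hx
  exact (Nat.mul_le_mul_left d hs).trans (Nat.le_add_right _ _)

theorem div_two_pow_eq_of_morton_div_two_pow_eq {d L s : ℕ} {p q : Fin d → ℕ}
    (hp : ∀ i, p i < 2 ^ L) (hq : ∀ i, q i < 2 ^ L)
    (h : morton d L p / 2 ^ (d * s) = morton d L q / 2 ^ (d * s)) (i : Fin d) :
    p i / 2 ^ s = q i / 2 ^ s := by
  rw [Nat.div_two_pow_eq_iff_testBit_eq] at h ⊢
  intro j hj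
  rcases lt_or_ge j L with hjL | hLj
  · have hk : d * s ≤ d * j + i := (Nat.mul_le_mul_left d hj).trans (Nat.le_add_right _ _)
    have hbits := testBit_morton d L p j i
    rw [h _ hk, testBit_morton] at hbits
    exact Bool.eq_iff_iff.mpr (by simpa [hjL] using hbits.symm)
  · rw [Nat.testBit_lt_two_pow ((hp i).trans_le (Nat.pow_le_pow_right two_pos hLj)),
      Nat.testBit_lt_two_pow ((hq i).trans_le (Nat.pow_le_pow_right two_pos hLj))]

theorem morton_order_embedding_general (d L lA lB : ℕ)
    (a b : Fin d → ℕ)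
    (ha : ∀ i, a i < 2 ^ L ∧ 2 ^ (L - lA) ∣ a i)
    (hb : ∀ i, b i < 2 ^ L ∧ 2 ^ (L - lB) ∣ b i) :
    ((∀ i, a i ≤ b i ∧ b i < a i + 2 ^ (L - lA)) → morton d L a ≤ morton d L b) ∧
    ((morton d L a ≤ morton d L b ∧ morton d L b < morton d L a + 2 ^ (d * (L - lA))) →
      ∀ i, a i ≤ b i ∧ b i < a i + 2 ^ (L - lA)) := by
  set s := L - lA
  refine ⟨fun hdesc => morton_le_morton fun i j hj => ?_, fun hmorton i => ?_⟩
  · have hsj : s ≤ j := by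
      by_contra! hjs
      simp [Nat.testBit_eq_false_of_two_pow_dvd (ha i).2 hjs] at hj
    rwa [(Nat.div_two_pow_eq_iff_testBit_eq.mp
      ((Nat.div_eq_div_iff_of_dvd (by positivity) (ha i).2).mpr (hdesc i)) j hsj)]
  · have hdiv := (Nat.div_eq_div_iff_of_dvd (by positivity)
      (two_pow_dvd_morton fun i => (ha i).2)).mpr hmorton
    exact (Nat.div_eq_div_iff_of_dvd (by positivity) (ha i).2).mp
      (div_two_pow_eq_of_morton_div_two_pow_eq (fun i => (hb i).1) (fun i => (ha i).1) hdiv i)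

/-- Order-embedding property of the Morton index with respect to the
cube descendant relation. -/
theorem morton_order_embedding (d L lA lB : ℕ) (hd : 1 ≤ d) (hL : 1 ≤ L)
    (hlA : lA ≤ L) (hlB : lB ≤ L) (hll : lA ≤ lB)
    (a b : Fin d → ℕ)
    (ha : ∀ i, a i < 2 ^ L ∧ 2 ^ (L - lA) ∣ a i)
    (hb : ∀ i, b i < 2 ^ L ∧ 2 ^ (L - lB) ∣ b i) :
    ((∀ i, a i ≤ b i ∧ b i < a i + 2 ^ (L - lA)) → morton d L a ≤ morton d L b) ∧
    ((morton d L a ≤ morton d L b ∧ morton d L b < morton d L a + 2 ^ (d * (L - lA))) →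
      ∀ i, a i ≤ b i ∧ b i < a i + 2 ^ (L - lA)) :=
  morton_order_embedding_general d L lA lB a b ha hb
end
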